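/- arXiv:1008.4829 — 4 statements merged into one kernel-verified Lean document; each statement's English description precedes it below -/
import Mathlib

section
/- Let Γ be a rooted tree, let x_{i_t} be a leaf of Γ of level at least t-1, and let x_{i_1},…,x_{i_t} be the unique directed path on t vertices terminating at x_{i_t}. Then the sequence of S-modules 0 → S/(I_t(Γ∖{x_{i_t}}) : (x_{i_1}⋯x_{i_t})) → S/I_t(Γ∖{x_{i_t}}) → S/I_t(Γ) → 0, in which the first map is multiplication by the monomial x_{i_1}⋯x_{i_t} and the second map is the canonical projection, is a well-defined exact sequence. -/
open scoped Classical

/-- A rooted forest on the ambient vertex type `Fin n`: a set of vertices together with a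
parent function (each edge `(parent v, v)` is directed away from the roots).  The `acyclic`
field guarantees that parent chains strictly decrease some level function, so the underlying
graph is a forest in which every vertex has at most one parent. -/
structure RootedForest (n : ℕ) where
  verts : Set (Fin n)
  par : Fin n → Option (Fin n)
  par_none : ∀ v, v ∉ verts → par v = none
  mem_left : ∀ v u, par v = some u → v ∈ verts
  mem_right : ∀ v u, par v = some u → u ∈ verts
  acyclic : ∃ lvl : Fin n → ℕ, ∀ v u, par v = some u → lvl v = lvl u + 1

/-- A rooted tree: a rooted forest with exactly one root (hence connected). -/
structure RootedTreeOn (n : ℕ) extends RootedForest n where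
  root : Fin n
  root_mem : root ∈ verts
  root_par : par root = none
  root_unique : ∀ v ∈ verts, par v = none → v = root

namespace RootedForest

variable {n : ℕ}

/-- One step of the parent function, on `Option`. -/
def parStep (F : RootedForest n) : Option (Fin n) → Option (Fin n)
  | none => none
  | some v => F.par v

/-- The level of a vertex: its distance to the root of its component, i.e. the number of
(strict) ancestors of `v`. -/
noncomputable def level (F : RootedForest n) (v : Fin n) : ℕ :=
  sInf {m : ℕ | F.parStep^[m + 1] (some v) = none}

/-- The height of a rooted forest: the maximal level of a vertex. -/
noncomputable def height (F : RootedForest n) : ℕ :=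
  sSup (F.level '' F.verts)

/-- A leaf: a vertex with no children. -/
def IsLeaf (F : RootedForest n) (v : Fin n) : Prop :=
  v ∈ F.verts ∧ ∀ u, F.par u ≠ some v

/-- An isolated vertex: a vertex incident to no edge. -/
def Isolated (F : RootedForest n) (v : Fin n) : Prop :=
  v ∈ F.verts ∧ F.par v = none ∧ ∀ u, F.par u ≠ some v

/-- `F.IsPath t p` : `p 0, p 1, …, p (t-1)` is a directed path on `t` (distinct) vertices
in `F`, each consecutive pair being a directed edge. -/
def IsPath (F : RootedForest n) (t : ℕ) (p : ℕ → Fin n) : Prop :=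
  (∀ j, j < t → p j ∈ F.verts) ∧
  (∀ j, j + 1 < t → F.par (p (j + 1)) = some (p j)) ∧
  (∀ j k, j < t → k < t → p j = p k → j = k)

/-- `F.DescOrSelf x v` : `v = x` or `v` is a descendant of `x`. -/
def DescOrSelf (F : RootedForest n) (x v : Fin n) : Prop :=
  ∃ m : ℕ, F.parStep^[m] (some v) = some x

/-- The induced subforest obtained by deleting the vertices in `W` (and all incident
edges). -/
noncomputable def delete (F : RootedForest n) (W : Set (Fin n)) : RootedForest n where
  verts := F.verts \ W
  par v :=
    if v ∈ F.verts \ W then (F.par v).bind (fun u => if u ∈ W then none else some u)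
    else none
  par_none := by
    intro v hv
    simp only [if_neg hv]
  mem_left := by
    intro v u h
    by_cases hv : v ∈ F.verts \ W
    · exact hv
    · simp only [if_neg hv] at h
      exact absurd h (by simp)
  mem_right := by
    intro v u h
    by_cases hv : v ∈ F.verts \ W
    · simp only [if_pos hv, Option.bind_eq_some_iff] at h
      obtain ⟨w, hw, hw2⟩ := h
      by_cases hwW : w ∈ W
      · simp [hwW] at hw2
      · simp only [if_neg hwW, Option.some.injEq] at hw2
        subst hw2
        exact ⟨F.mem_right v w hw, hwW⟩
    · simp only [if_neg hv] at h
      exact absurd h (by simp)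
  acyclic := by
    obtain ⟨lvl, hlvl⟩ := F.acyclic
    refine ⟨lvl, fun v u h => ?_⟩
    by_cases hv : v ∈ F.verts \ W
    · simp only [if_pos hv, Option.bind_eq_some_iff] at h
      obtain ⟨w, hw, hw2⟩ := h
      by_cases hwW : w ∈ W
      · simp [hwW] at hw2
      · simp only [if_neg hwW, Option.some.injEq] at hw2
        subst hw2
        exact hlvl v w hw
    · simp only [if_neg hv] at h
      exact absurd h (by simp)

/-- The monomials corresponding to the directed paths on `t` vertices in `F`. -/
def pathGens (k : Type*) [Field k] (F : RootedForest n) (t : ℕ) :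
    Set (MvPolynomial (Fin n) k) :=
  {f | ∃ p : ℕ → Fin n, F.IsPath t p ∧ f = ∏ j ∈ Finset.range t, MvPolynomial.X (p j)}

/-- The path ideal `I_t(F)`: the ideal of `k[x_1,…,x_n]` generated by the monomials
corresponding to the directed paths on `t` vertices in `F`. -/
noncomputable def pathIdeal (k : Type*) [Field k] (F : RootedForest n) (t : ℕ) :
    Ideal (MvPolynomial (Fin n) k) :=
  Ideal.span (F.pathGens k t)

/-- `p_t(F)`: the maximal number of pairwise vertex-disjoint directed paths on `t+1`
vertices (i.e. of length `t`) in `F`. -/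
noncomputable def pDisj (F : RootedForest n) (t : ℕ) : ℕ :=
  sSup {N : ℕ | ∃ P : Fin N → (ℕ → Fin n),
    (∀ i, F.IsPath (t + 1) (P i)) ∧
    (∀ i i', i ≠ i' → ∀ j j', j < t + 1 → j' < t + 1 → P i j ≠ P i' j')}

/-- `l_s(F)`: the number of leaves of `F` whose level is at least `s - 1`. -/
noncomputable def lCount (F : RootedForest n) (s : ℕ) : ℕ :=
  Set.ncard {v | F.IsLeaf v ∧ s - 1 ≤ F.level v}

end RootedForest

/-!
For an ideal `I` of a commutative ring `R` and any `f ∈ R`, `0 → R/(I : f) → R/I → R/(I + (f)) → 0`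
(multiplication by `f`, then projection) is exact. The theorem is the case
`I = I_t(Γ∖{x})`, `f = x_{i_1}⋯x_{i_t}`: since `x` has no children, a directed path on `t`
vertices through `x` must end at `x`, hence (walking back along parents) equals the path `p`, so
`I_t(Γ) = I_t(Γ∖{x}) + (f)`.
-/

namespace Ideal

variable {R : Type*} [CommRing R] (I : Ideal R) (f : R)

lemma ker_smul_mkQ : LinearMap.ker (f • I.mkQ) = I.colon (span {f} : Set R) := by
  ext g
  rw [LinearMap.mem_ker, LinearMap.smul_apply, Submodule.mkQ_apply, ← Submodule.Quotient.mk_smul,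
    Submodule.Quotient.mk_eq_zero, smul_eq_mul, mem_colon_span_singleton, mul_comm]

noncomputable def mulColonQuotient : (R ⧸ I.colon (span {f} : Set R)) →ₗ[R] R ⧸ I :=
  Submodule.liftQ _ (f • I.mkQ) (I.ker_smul_mkQ f).ge

lemma mulColonQuotient_mk (g : R) :
    I.mulColonQuotient f (Submodule.Quotient.mk g) = Submodule.Quotient.mk (f * g) :=
  rfl

lemma mulColonQuotient_injective : Function.Injective (I.mulColonQuotient f) :=
  LinearMap.ker_eq_bot.mp (Submodule.ker_liftQ_eq_bot' _ _ (I.ker_smul_mkQ f).symm)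

lemma exact_mulColonQuotient_factor :
    Function.Exact (I.mulColonQuotient f) (Submodule.factor (le_sup_left : I ≤ I ⊔ span {f})) := by
  intro y
  obtain ⟨g, rfl⟩ := Submodule.Quotient.mk_surjective _ y
  change Submodule.Quotient.mk (p := I ⊔ span {f}) g = 0 ↔ _
  rw [Submodule.Quotient.mk_eq_zero, Submodule.mem_sup]
  constructor
  · rintro ⟨a, ha, _, hb, rfl⟩
    obtain ⟨c, rfl⟩ := mem_span_singleton'.mp hb
    refine ⟨Submodule.Quotient.mk c, (Submodule.Quotient.eq _).mpr ?_⟩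
    show f * c - (a + c * f) ∈ I
    rw [show f * c - (a + c * f) = -a by ring]
    exact neg_mem ha
  · rintro ⟨z, hz⟩
    obtain ⟨c, rfl⟩ := Submodule.Quotient.mk_surjective _ z
    exact ⟨g - f * c, (Submodule.Quotient.eq _).mp hz.symm,
      f * c, mem_span_singleton'.mpr ⟨c, mul_comm c f⟩, sub_add_cancel g _⟩

end Ideal

namespace RootedForest

variable {n t : ℕ} {F : RootedForest n} {p q : ℕ → Fin n}

lemma IsPath.of_delete {W : Set (Fin n)} (hq : (F.delete W).IsPath t q) : F.IsPath t q := by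
  obtain ⟨hverts, hpar, hinj⟩ := hq
  refine ⟨fun j hj => (hverts j hj).1, fun j hj => ?_, hinj⟩
  have hdel := hpar j hj
  simp only [delete] at hdel
  split_ifs at hdel
  obtain ⟨u, hu, hdel⟩ := Option.bind_eq_some_iff.mp hdel
  split_ifs at hdel
  rwa [← Option.some.inj hdel]

lemma IsPath.delete {W : Set (Fin n)} (hq : F.IsPath t q) (hW : ∀ j < t, q j ∉ W) :
    (F.delete W).IsPath t q := by
  obtain ⟨hverts, hpar, hinj⟩ := hq
  refine ⟨fun j hj => ⟨hverts j hj, hW j hj⟩, fun j hj => ?_, hinj⟩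
  simp only [RootedForest.delete]
  rw [if_pos ⟨hverts _ hj, hW _ hj⟩, hpar j hj, Option.bind_some, if_neg (hW j (by omega))]

lemma IsPath.eq_of_apply_pred_eq (hp : F.IsPath t p) (hq : F.IsPath t q)
    (hlast : q (t - 1) = p (t - 1)) {j : ℕ} (hj : j < t) : q j = p j := by
  replace hj : j ≤ t - 1 := by omega
  induction hj using Nat.decreasingInduction with
  | self => exact hlast
  | of_succ i hi ih =>
    have hedge : i + 1 < t := by omega
    exact Option.some.inj ((hq.2.1 i hedge).symm.trans (ih ▸ hp.2.1 i hedge))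

lemma IsPath.eq_pred_of_apply_eq_of_isLeaf {x : Fin n} (hq : F.IsPath t q) (hx : F.IsLeaf x)
    {j : ℕ} (hj : j < t) (hqj : q j = x) : j = t - 1 := by
  by_contra hne
  exact hx.2 _ (hqj ▸ hq.2.1 j (by omega))

variable (k : Type*) [Field k]

lemma pathIdeal_delete_le (W : Set (Fin n)) : pathIdeal k (F.delete W) t ≤ pathIdeal k F t :=
  Ideal.span_mono fun _ ⟨q, hq, hf⟩ => ⟨q, hq.of_delete, hf⟩

lemma pathIdeal_eq_delete_sup_span {x : Fin n} (hx : F.IsLeaf x) (hp : F.IsPath t p)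
    (hpx : p (t - 1) = x) :
    pathIdeal k F t =
      pathIdeal k (F.delete {x}) t ⊔ Ideal.span {∏ j ∈ Finset.range t, MvPolynomial.X (p j)} := by
  refine le_antisymm (Ideal.span_le.mpr ?_) (sup_le (pathIdeal_delete_le k _)
    ((Ideal.span_singleton_le_iff_mem _).mpr (Ideal.subset_span ⟨p, hp, rfl⟩)))
  rintro _ ⟨q, hq, rfl⟩
  by_cases hxq : ∃ j < t, q j = x
  · obtain ⟨j, hj, hqj⟩ := hxq
    obtain rfl := hq.eq_pred_of_apply_eq_of_isLeaf hx hj hqj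
    have hqp : ∏ j ∈ Finset.range t, MvPolynomial.X (q j) =
        (∏ j ∈ Finset.range t, MvPolynomial.X (p j) : MvPolynomial (Fin n) k) :=
      Finset.prod_congr rfl fun i hi =>
        by rw [hp.eq_of_apply_pred_eq hq (hqj.trans hpx.symm) (Finset.mem_range.mp hi)]
    rw [hqp]
    exact Ideal.mem_sup_right (Ideal.mem_span_singleton_self _)
  · push Not at hxq
    exact Ideal.mem_sup_left (Ideal.subset_span ⟨q, hq.delete hxq, rfl⟩)

end RootedForest

open RootedForest in
theorem exact_sequence_pathIdeal_general {n t : ℕ} (k : Type*) [Field k]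
    (Γ : RootedTreeOn n) (x : Fin n) (p : ℕ → Fin n)
    (hleaf : Γ.toRootedForest.IsLeaf x)
    (hp : Γ.toRootedForest.IsPath t p) (hpt : p (t - 1) = x) :
    ∃ (φ : (MvPolynomial (Fin n) k ⧸
              (pathIdeal k (Γ.toRootedForest.delete {x}) t).colon
                ((Ideal.span {∏ j ∈ Finset.range t, MvPolynomial.X (p j)} :
                  Ideal (MvPolynomial (Fin n) k)) : Set (MvPolynomial (Fin n) k))) →ₗ[MvPolynomial (Fin n) k]
            (MvPolynomial (Fin n) k ⧸ pathIdeal k (Γ.toRootedForest.delete {x}) t))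
      (ψ : (MvPolynomial (Fin n) k ⧸ pathIdeal k (Γ.toRootedForest.delete {x}) t) →ₗ[MvPolynomial (Fin n) k]
            (MvPolynomial (Fin n) k ⧸ pathIdeal k Γ.toRootedForest t)),
      (∀ g : MvPolynomial (Fin n) k,
        φ (Submodule.Quotient.mk g) =
          Submodule.Quotient.mk ((∏ j ∈ Finset.range t, MvPolynomial.X (p j)) * g)) ∧
      (∀ g : MvPolynomial (Fin n) k,
        ψ (Submodule.Quotient.mk g) = Submodule.Quotient.mk g) ∧
      Function.Injective φ ∧ Function.Exact φ ψ ∧ Function.Surjective ψ := by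
  rw [pathIdeal_eq_delete_sup_span k hleaf hp hpt]
  exact ⟨_, _, Ideal.mulColonQuotient_mk _ _, Submodule.factor_mk le_sup_left,
    Ideal.mulColonQuotient_injective _ _, Ideal.exact_mulColonQuotient_factor _ _,
    Submodule.factor_surjective _⟩

open RootedForest in
/-- With `x = p (t-1)` a leaf of level at least `t-1` and
`f = x_{i_1}⋯x_{i_t}` the monomial of the unique directed path on `t` vertices terminating
at it, the sequence
`0 → S/(I_t(Γ∖{x}) : (f)) → S/I_t(Γ∖{x}) → S/I_t(Γ) → 0`,
with first map multiplication by `f` and second map the canonical projection, is a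
well-defined exact sequence of `S`-modules. -/
theorem exact_sequence_pathIdeal {n t : ℕ} (ht : 2 ≤ t) (k : Type*) [Field k]
    (Γ : RootedTreeOn n) (x : Fin n) (p : ℕ → Fin n)
    (hleaf : Γ.toRootedForest.IsLeaf x)
    (hlevel : t - 1 ≤ Γ.toRootedForest.level x)
    (hp : Γ.toRootedForest.IsPath t p) (hpt : p (t - 1) = x) :
    ∃ (φ : (MvPolynomial (Fin n) k ⧸
              (pathIdeal k (Γ.toRootedForest.delete {x}) t).colon
                ((Ideal.span {∏ j ∈ Finset.range t, MvPolynomial.X (p j)} :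
                  Ideal (MvPolynomial (Fin n) k)) : Set (MvPolynomial (Fin n) k))) →ₗ[MvPolynomial (Fin n) k]
            (MvPolynomial (Fin n) k ⧸ pathIdeal k (Γ.toRootedForest.delete {x}) t))
      (ψ : (MvPolynomial (Fin n) k ⧸ pathIdeal k (Γ.toRootedForest.delete {x}) t) →ₗ[MvPolynomial (Fin n) k]
            (MvPolynomial (Fin n) k ⧸ pathIdeal k Γ.toRootedForest t)),
      (∀ g : MvPolynomial (Fin n) k,
        φ (Submodule.Quotient.mk g) =
          Submodule.Quotient.mk ((∏ j ∈ Finset.range t, MvPolynomial.X (p j)) * g)) ∧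
      (∀ g : MvPolynomial (Fin n) k,
        ψ (Submodule.Quotient.mk g) = Submodule.Quotient.mk g) ∧
      Function.Injective φ ∧ Function.Exact φ ψ ∧ Function.Surjective ψ :=
  exact_sequence_pathIdeal_general k Γ x p hleaf hp hpt
end

section
/- In the setup below (x_{i_t} a leaf at the highest level h ≥ t-1 of Γ), one has the equality of ideals I_t(Γ∖{x_{i_t}}) : (x_{i_1}⋯x_{i_t}) = I_t(Γ∖P) + (x_{i_0}) + Σ_{j=0}^{t-1} I_{t-j}(Δ_j∖P), where the summand (x_{i_0}) is omitted when x_{i_0} does not exist. -/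
open scoped Classical

open RootedForest

/-- Vertex set of `Γ_j`, the induced subtree of `Γ` rooted at `x_{i_j}`, for `j = 0,…,t`.
Here the path is indexed so that `x_{i_{j+1}} = p j`, and `x_{i_0}` is the parent of
`x_{i_1} = p 0` when it exists (when it does not exist, this set is empty for `j = 0`). -/
def GammaSet {n : ℕ} (Γ : RootedTreeOn n) (p : ℕ → Fin n) : ℕ → Set (Fin n)
  | 0 => {v | ∃ u, Γ.par (p 0) = some u ∧ Γ.toRootedForest.DescOrSelf u v}
  | j + 1 => {v | Γ.toRootedForest.DescOrSelf (p j) v}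

/-- The set `P = {x_{i_0}, x_{i_1}, …, x_{i_t}}` (with the parent `x_{i_0}` of `x_{i_1}`
omitted when it does not exist). -/
def Pset {n : ℕ} (Γ : RootedTreeOn n) (p : ℕ → Fin n) (t : ℕ) : Set (Fin n) :=
  {v | Γ.par (p 0) = some v} ∪ {v | ∃ j, j < t ∧ p j = v}

/-- The rooted forest `Δ_j ∖ P`, where `Δ_j = Γ_j ∖ Γ_{j+1}`. -/
noncomputable def DeltaDel {n : ℕ} (Γ : RootedTreeOn n) (p : ℕ → Fin n) (t j : ℕ) :
    RootedForest n :=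
  Γ.toRootedForest.delete ((GammaSet Γ p j \ GammaSet Γ p (j + 1))ᶜ ∪ Pset Γ p t)

/-! Both sides are monomial ideals, so the colon ideal is generated by the monomials
`x_q / gcd(x_q, x_{i_1}⋯x_{i_t})` for the paths `q` of `Γ∖{x_{i_t}}`, and the identity becomes
a comparison of exponent vectors. A path `q` avoiding `x_{i_t}` either passes through `x_{i_0}`,
or avoids `P`, or leaves the chain `x_{i_1},…,x_{i_t}` for the last time at some `x_{i_j}` with
`j < t`; since `q` cannot climb above `x_{i_1}` without meeting `x_{i_0}`, what follows has at
least `t-j` vertices and lies in `Δ_j∖P`. Conversely, a path of `Δ_j∖P` on `t-j` vertices ends at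
level at most `h`, the level of `x_{i_t}`, so it starts at a child of `x_{i_j}`, and prefixing
`x_{i_1},…,x_{i_j}` gives a path on `t` vertices avoiding `x_{i_t}`; likewise `x_{i_0}` followed
by `x_{i_1},…,x_{i_{t-1}}`. -/

namespace MvPolynomial

variable {σ R : Type*} [CommSemiring R]

theorem colon_span_monomial_eq {S T : Set (σ →₀ ℕ)} {e : σ →₀ ℕ}
    (h_le : ∀ d, ∀ s ∈ S, s ≤ d + e → ∃ g ∈ T, g ≤ d)
    (h_ge : ∀ g ∈ T, ∃ s ∈ S, s ≤ g + e) :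
    (Ideal.span ((fun s => monomial s (1 : R)) '' S)).colon
        (Ideal.span {monomial e (1 : R)} : Set (MvPolynomial σ R)) =
      Ideal.span ((fun s => monomial s (1 : R)) '' T) := by
  apply le_antisymm
  · intro f hf
    rw [Ideal.mem_colon_span_singleton, mem_ideal_span_monomial_image] at hf
    rw [mem_ideal_span_monomial_image]
    intro d hd
    have hde : d + e ∈ (f * monomial e 1).support := by
      rwa [mem_support_iff, coeff_mul_monomial, mul_one, ← mem_support_iff]
    obtain ⟨s, hs, hle⟩ := hf _ hde
    exact h_le d s hs hle
  · rw [Ideal.span_le]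
    rintro _ ⟨g, hg, rfl⟩
    obtain ⟨s, hs, hle⟩ := h_ge g hg
    rw [SetLike.mem_coe, Ideal.mem_colon_span_singleton, monomial_mul, one_mul]
    exact Ideal.mem_of_dvd _ (monomial_dvd_monomial.2 ⟨Or.inr hle, dvd_rfl⟩)
      (Ideal.subset_span ⟨s, hs, rfl⟩)

end MvPolynomial

theorem Ideal.span_biUnion_eq_sum {α ι : Type*} [CommSemiring α] (s : Finset ι)
    (T : ι → Set α) : Ideal.span (⋃ j ∈ s, T j) = ∑ j ∈ s, Ideal.span (T j) := by
  classical
  induction s using Finset.induction_on with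
  | empty => simp
  | insert a s ha ih =>
    rw [Finset.set_biUnion_insert, Ideal.span_union, ih, Finset.sum_insert ha,
      Submodule.add_eq_sup]

section SeqExp

open Finset Finsupp

variable {σ : Type*}

noncomputable def seqExp (q : ℕ → σ) (t : ℕ) : σ →₀ ℕ :=
  ∑ j ∈ range t, single (q j) 1

def appendSeq (a : ℕ) (p q : ℕ → σ) (i : ℕ) : σ :=
  if i < a then p i else q (i - a)

lemma appendSeq_of_lt {a i : ℕ} (p q : ℕ → σ) (h : i < a) : appendSeq a p q i = p i :=
  if_pos h

lemma appendSeq_of_le {a i : ℕ} (p q : ℕ → σ) (h : a ≤ i) :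
    appendSeq a p q i = q (i - a) :=
  if_neg (Nat.not_lt.2 h)

lemma seqExp_apply [DecidableEq σ] (q : ℕ → σ) (t : ℕ) (v : σ) :
    seqExp q t v = #{j ∈ range t | q j = v} := by
  simp [seqExp, Finsupp.finsetSum_apply, Finsupp.single_apply, Finset.sum_boole]

lemma seqExp_mono (q : ℕ → σ) {a b : ℕ} (h : a ≤ b) : seqExp q a ≤ seqExp q b :=
  Finset.sum_le_sum_of_subset (range_subset_range.2 h)

lemma seqExp_append (p q : ℕ → σ) (a b : ℕ) :
    seqExp (appendSeq a p q) (a + b) = seqExp p a + seqExp q b := by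
  rw [seqExp, sum_range_add]
  congr 1
  · exact sum_congr rfl fun i hi => by rw [appendSeq_of_lt p q (mem_range.1 hi)]
  · exact sum_congr rfl fun i _ => by rw [appendSeq_of_le p q (by omega), Nat.add_sub_cancel_left]

lemma seqExp_le {q : ℕ → σ} {t : ℕ} {d : σ →₀ ℕ}
    (hinj : ∀ i j, i < t → j < t → q i = q j → i = j) (hd : ∀ i < t, 1 ≤ d (q i)) :
    seqExp q t ≤ d := by
  classical
  intro v
  rw [seqExp_apply]
  rcases (#{j ∈ range t | q j = v}).eq_zero_or_pos with h | h
  · rw [h]; exact Nat.zero_le _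
  · obtain ⟨i, hi⟩ := card_pos.1 h
    rw [mem_filter, mem_range] at hi
    refine le_trans (card_le_one.2 fun a ha b hb => ?_) (hi.2 ▸ hd i hi.1)
    rw [mem_filter, mem_range] at ha hb
    exact hinj a b ha.1 hb.1 (ha.2.trans hb.2.symm)

lemma one_le_of_seqExp_le_add {p q : ℕ → σ} {t : ℕ} {d : σ →₀ ℕ}
    (hle : seqExp q t ≤ d + seqExp p t) {i : ℕ} (hi : i < t) (hp : ∀ j < t, p j ≠ q i) :
    1 ≤ d (q i) := by
  classical
  have hq : 1 ≤ seqExp q t (q i) := by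
    rw [seqExp_apply]
    exact card_pos.2 ⟨i, mem_filter.2 ⟨mem_range.2 hi, rfl⟩⟩
  have hp0 : seqExp p t (q i) = 0 := by
    rw [seqExp_apply, card_eq_zero, filter_eq_empty_iff]
    exact fun j hj => hp j (mem_range.1 hj)
  have := hle (q i)
  rw [Finsupp.add_apply, hp0] at this
  omega

lemma MvPolynomial.prod_X_eq_monomial_seqExp {R : Type*} [CommSemiring R] (q : ℕ → σ)
    (t : ℕ) : ∏ j ∈ range t, (MvPolynomial.X (q j) : MvPolynomial σ R) =
      MvPolynomial.monomial (seqExp q t) 1 := by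
  rw [seqExp, MvPolynomial.monomial_sum_one]
  rfl

end SeqExp

namespace RootedForest

variable {n : ℕ} (F : RootedForest n)

lemma parStep_some (v : Fin n) : F.parStep (some v) = F.par v := rfl

lemma eq_add_of_parStep_iterate {lvl : Fin n → ℕ}
    (hlvl : ∀ v u, F.par v = some u → lvl v = lvl u + 1) :
    ∀ {m : ℕ} {v w : Fin n}, F.parStep^[m] (some v) = some w → lvl v = lvl w + m
  | 0, v, w, h => by cases Option.some.inj h; rfl
  | m + 1, v, w, h => by
    rw [Function.iterate_succ_apply, parStep_some] at h
    cases hpar : F.par v with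
    | none => rw [hpar, Function.iterate_fixed rfl] at h; cases h
    | some u =>
      rw [hpar] at h
      have := eq_add_of_parStep_iterate hlvl h
      rw [hlvl v u hpar]
      omega

lemma parStep_iterate_level_succ (v : Fin n) : F.parStep^[F.level v + 1] (some v) = none := by
  refine Nat.sInf_mem (s := {m | F.parStep^[m + 1] (some v) = none}) ?_
  obtain ⟨lvl, hlvl⟩ := F.acyclic
  refine ⟨lvl v, ?_⟩
  cases h : F.parStep^[lvl v + 1] (some v) with
  | none => exact h
  | some w => have := F.eq_add_of_parStep_iterate hlvl h; omega

lemma level_parent {v u : Fin n} (h : F.par v = some u) : F.level v = F.level u + 1 := by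
  have hstep : ∀ m, F.parStep^[m + 1] (some v) = F.parStep^[m] (some u) := fun m => by
    rw [Function.iterate_succ_apply, parStep_some, h]
  have hv := F.parStep_iterate_level_succ v
  obtain ⟨l, hl⟩ : ∃ l, F.level v = l + 1 := by
    refine Nat.exists_eq_succ_of_ne_zero fun h0 => ?_
    rw [h0, hstep] at hv
    exact Option.some_ne_none u hv
  have hle_v : F.level v ≤ F.level u + 1 :=
    Nat.sInf_le (by rw [Set.mem_ofPred_eq, hstep]; exact F.parStep_iterate_level_succ u)
  have hle_u : F.level u ≤ l := Nat.sInf_le (by rwa [hl, hstep] at hv)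
  omega

lemma level_eq_add_of_parStep_iterate {m : ℕ} {v w : Fin n}
    (h : F.parStep^[m] (some v) = some w) : F.level v = F.level w + m :=
  F.eq_add_of_parStep_iterate (fun _ _ => F.level_parent) h

lemma level_le_height {v : Fin n} (hv : v ∈ F.verts) : F.level v ≤ F.height :=
  le_csSup ((Set.toFinite F.verts).image F.level).bddAbove (Set.mem_image_of_mem _ hv)

lemma isPath_delete_iff (W : Set (Fin n)) (t : ℕ) (q : ℕ → Fin n) :
    (F.delete W).IsPath t q ↔ F.IsPath t q ∧ ∀ i < t, q i ∉ W := by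
  constructor
  · rintro ⟨hv, he, hi⟩
    refine ⟨⟨fun i hi' => (hv i hi').1, fun i hi' => ?_, hi⟩, fun i hi' => (hv i hi').2⟩
    have h := he i hi'
    have hmem : q (i + 1) ∈ F.verts \ W := hv (i + 1) hi'
    simp only [delete] at h
    rw [if_pos hmem, Option.bind_eq_some_iff] at h
    obtain ⟨w, hw, hw'⟩ := h
    split_ifs at hw' with hwW
    cases hw'
    exact hw
  · rintro ⟨⟨hv, he, hi⟩, hW⟩
    refine ⟨fun i hi' => ⟨hv i hi', hW i hi'⟩, fun i hi' => ?_, hi⟩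
    simp only [delete]
    rw [if_pos ⟨hv (i + 1) hi', hW (i + 1) hi'⟩, he i hi', Option.bind_some,
      if_neg (hW i (by omega))]

variable {F} {t : ℕ} {q : ℕ → Fin n}

lemma IsPath.mem (h : F.IsPath t q) {i : ℕ} (hi : i < t) : q i ∈ F.verts := h.1 i hi

lemma IsPath.par_succ (h : F.IsPath t q) {i : ℕ} (hi : i + 1 < t) :
    F.par (q (i + 1)) = some (q i) :=
  h.2.1 i hi

lemma IsPath.inj (h : F.IsPath t q) {i j : ℕ} (hi : i < t) (hj : j < t) (hij : q i = q j) :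
    i = j :=
  h.2.2 i j hi hj hij

lemma IsPath.mono (h : F.IsPath t q) {a : ℕ} (ha : a ≤ t) : F.IsPath a q :=
  ⟨fun _ hi => h.mem (by omega), fun _ hi => h.par_succ (by omega),
    fun _ _ hi hj => h.inj (by omega) (by omega)⟩

lemma IsPath.shift (h : F.IsPath t q) (s ℓ : ℕ) (hs : s + ℓ ≤ t) :
    F.IsPath ℓ (fun i => q (s + i)) :=
  ⟨fun _ hi => h.mem (by omega), fun i hi => h.par_succ (i := s + i) (by omega),
    fun _ _ hi hj hij => by have := h.inj (by omega) (by omega) hij; omega⟩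

lemma IsPath.append {p : ℕ → Fin n} {a b : ℕ} (hp : F.IsPath a p) (hq : F.IsPath b q)
    (hedge : 0 < a → 0 < b → F.par (q 0) = some (p (a - 1)))
    (hdisj : ∀ i < a, ∀ j < b, p i ≠ q j) : F.IsPath (a + b) (appendSeq a p q) := by
  refine ⟨fun i hi => ?_, fun i hi => ?_, fun i j hi hj hij => ?_⟩
  · rcases lt_or_ge i a with h | h
    · rw [appendSeq_of_lt p q h]; exact hp.mem h
    · rw [appendSeq_of_le p q h]; exact hq.mem (by omega)
  · rcases lt_or_ge (i + 1) a with h | h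
    · rw [appendSeq_of_lt p q h, appendSeq_of_lt p q (by omega)]; exact hp.par_succ h
    · rw [appendSeq_of_le p q h]
      rcases Nat.lt_or_ge i a with h' | h'
      · rw [appendSeq_of_lt p q h', show i + 1 - a = 0 by omega, show i = a - 1 by omega]
        exact hedge (by omega) (by omega)
      · rw [appendSeq_of_le p q h', show i + 1 - a = i - a + 1 by omega]
        exact hq.par_succ (by omega)
  · rcases lt_or_ge i a with h₁ | h₁ <;> rcases lt_or_ge j a with h₂ | h₂ <;>
      simp only [appendSeq_of_lt p q, appendSeq_of_le p q, *] at hij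
    · exact hp.inj h₁ h₂ hij
    · exact absurd hij (hdisj i h₁ _ (by omega))
    · exact absurd hij.symm (hdisj j h₂ _ (by omega))
    · have := hq.inj (by omega) (by omega) hij; omega

lemma IsPath.parStep_iterate (h : F.IsPath t q) {d i : ℕ} (hi : i + d < t) :
    F.parStep^[d] (some (q (i + d))) = some (q i) := by
  induction d with
  | zero => rfl
  | succ d ih =>
    rw [← add_assoc, Function.iterate_succ_apply, parStep_some, h.par_succ (by omega)]
    exact ih (by omega)

lemma IsPath.level_add (h : F.IsPath t q) {d i : ℕ} (hi : i + d < t) :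
    F.level (q (i + d)) = F.level (q i) + d :=
  F.level_eq_add_of_parStep_iterate (h.parStep_iterate hi)

lemma IsPath.ne_of_par_head (h : F.IsPath t q) {u : Fin n} (hu : F.par (q 0) = some u)
    {j : ℕ} (hj : j < t) : q j ≠ u := by
  intro hqj
  have := h.level_add (i := 0) (d := j) (by omega)
  rw [zero_add, hqj, F.level_parent hu] at this
  omega

lemma IsPath.eq_head_of_parStep_iterate (h : F.IsPath t q) {i m : ℕ} {x : Fin n} (hi : i < t)
    (hx : F.parStep^[m] (some (q i)) = some x) (hlev : F.level x = F.level (q 0)) :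
    x = q 0 := by
  have hlevi := h.level_add (i := 0) (d := i) (by omega)
  rw [zero_add, F.level_eq_add_of_parStep_iterate hx, hlev] at hlevi
  obtain rfl : m = i := by omega
  have := h.parStep_iterate (i := 0) (d := m) (by omega)
  rw [zero_add, hx] at this
  exact Option.some.inj this

lemma IsPath.index_le_of_eq {p : ℕ → Fin n} {a : ℕ} (hp : F.IsPath a p) (hq : F.IsPath t q)
    {i j : ℕ} (hi : i < t) (hj : j < a) (hij : q i = p j)
    (hhead : ∀ l < t, F.par (p 0) ≠ some (q l)) : i ≤ j := by
  by_contra! hji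
  have hq_up := hq.parStep_iterate (i := i - j) (d := j) (by omega)
  have hp_up := hp.parStep_iterate (i := 0) (d := j) (by omega)
  rw [zero_add] at hp_up
  rw [Nat.sub_add_cancel hji.le, hij, hp_up] at hq_up
  have hpar := hq.par_succ (i := i - j - 1) (by omega)
  rw [Nat.sub_add_cancel (by omega : 1 ≤ i - j), ← Option.some.inj hq_up] at hpar
  exact hhead _ (by omega) hpar

lemma IsPath.par_head_eq (h : F.IsPath t q) (ht : 0 < t) {x : Fin n}
    (hx : F.DescOrSelf x (q 0)) (hne : q 0 ≠ x) (hheight : F.height ≤ F.level x + t) :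
    F.par (q 0) = some x := by
  obtain ⟨m, hm⟩ := hx
  have hq0 := F.level_eq_add_of_parStep_iterate hm
  have hlast := h.level_add (i := 0) (d := t - 1) (by omega)
  have hmax := F.level_le_height (h.mem (i := 0 + (t - 1)) (by omega))
  obtain rfl | rfl : m = 0 ∨ m = 1 := by omega
  · exact absurd (Option.some.inj hm) hne
  · exact hm

def pathExponents (F : RootedForest n) (t : ℕ) : Set (Fin n →₀ ℕ) :=
  (fun q => seqExp q t) '' {q | F.IsPath t q}

lemma pathIdeal_eq_span_monomial (k : Type*) [Field k] (F : RootedForest n) (t : ℕ) :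
    pathIdeal k F t =
      Ideal.span ((fun s => MvPolynomial.monomial s (1 : k)) '' F.pathExponents t) := by
  rw [pathIdeal, pathExponents, Set.image_image]
  congr 1
  ext f
  simp only [pathGens, MvPolynomial.prod_X_eq_monomial_seqExp, Set.mem_ofPred_eq,
    Set.mem_image, eq_comm]

lemma isPath_one {v : Fin n} (hv : v ∈ F.verts) : F.IsPath 1 (fun _ => v) :=
  ⟨fun _ _ => hv, fun _ hi => by omega, fun _ _ hi hj _ => by omega⟩

lemma seqExp_add_mem_pathExponents_delete {W : Set (Fin n)} {p q : ℕ → Fin n} {a b : ℕ}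
    (hp : F.IsPath a p) (hq : F.IsPath b q)
    (hedge : 0 < a → 0 < b → F.par (q 0) = some (p (a - 1)))
    (hdisj : ∀ i < a, ∀ j < b, p i ≠ q j)
    (hpW : ∀ i < a, p i ∉ W) (hqW : ∀ j < b, q j ∉ W) :
    seqExp p a + seqExp q b ∈ (F.delete W).pathExponents (a + b) := by
  refine ⟨appendSeq a p q, (F.isPath_delete_iff _ _ _).2 ⟨hp.append hq hedge hdisj, ?_⟩,
    seqExp_append p q a b⟩
  intro i hi
  rcases lt_or_ge i a with h | h
  · rw [appendSeq_of_lt p q h]; exact hpW i h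
  · rw [appendSeq_of_le p q h]; exact hqW _ (by omega)

end RootedForest

section ColonIdeal

open RootedForest MvPolynomial Finset

variable {n t : ℕ} {Γ : RootedTreeOn n} {p q : ℕ → Fin n}

def colonExponents (Γ : RootedTreeOn n) (p : ℕ → Fin n) (t : ℕ) : Set (Fin n →₀ ℕ) :=
  (Γ.delete (Pset Γ p t)).pathExponents t
    ∪ (fun u => Finsupp.single u 1) '' {u | Γ.par (p 0) = some u}
    ∪ ⋃ j ∈ range t, (DeltaDel Γ p t j).pathExponents (t - j)

lemma span_colonExponents (k : Type*) [Field k] :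
    Ideal.span ((fun s => monomial s (1 : k)) '' colonExponents Γ p t) =
      pathIdeal k (Γ.delete (Pset Γ p t)) t
        + Ideal.span {f | ∃ u, Γ.par (p 0) = some u ∧ f = X u}
        + ∑ j ∈ range t, pathIdeal k (DeltaDel Γ p t j) (t - j) := by
  have hX : {f : MvPolynomial (Fin n) k | ∃ u, Γ.par (p 0) = some u ∧ f = X u} =
      (fun s => monomial s 1) ''
        ((fun u => Finsupp.single u 1) '' {u | Γ.par (p 0) = some u}) := by
    ext f
    simp only [Set.image_image, Set.mem_image, Set.mem_ofPred_eq, eq_comm]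
    rfl
  simp only [colonExponents, Set.image_union, Set.image_iUnion₂, Ideal.span_union,
    Ideal.span_biUnion_eq_sum, Submodule.add_eq_sup, pathIdeal_eq_span_monomial, hX]

lemma isPath_deltaDel_iff {j L : ℕ} :
    (DeltaDel Γ p t j).IsPath L q ↔ Γ.IsPath L q ∧
      ∀ i < L, q i ∈ GammaSet Γ p j ∧ q i ∉ GammaSet Γ p (j + 1) ∧ q i ∉ Pset Γ p t := by
  rw [DeltaDel, isPath_delete_iff]
  simp only [Set.mem_union, Set.mem_compl_iff, Set.mem_sdiff, not_or, not_not, and_assoc]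

lemma isPath_deltaDel_tail (hp : Γ.IsPath t p) (hq : Γ.IsPath t q)
    (hhead : ∀ i < t, Γ.par (p 0) ≠ some (q i)) (hlast : ∀ i < t, q i ≠ p (t - 1))
    {b jb : ℕ} (hb : b < t) (hjb : jb < t) (hbj : b ≤ jb) (hqb : q b = p jb)
    (hmax : ∀ i < t, b < i → ∀ j < t, q i ≠ p j) :
    jb + 1 < t ∧ (DeltaDel Γ p t (jb + 1)).IsPath (t - (jb + 1)) (fun i => q (b + 1 + i)) := by
  have hjb_ne : jb ≠ t - 1 := fun h => hlast b hb (h ▸ hqb)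
  have htail : Γ.IsPath (t - (jb + 1)) (fun i => q (b + 1 + i)) := hq.shift _ _ (by omega)
  have hlev : Γ.level (p (jb + 1)) = Γ.level (q (b + 1 + 0)) := by
    rw [Γ.level_parent (hp.par_succ (by omega)), Γ.level_parent (hq.par_succ (by omega)), hqb]
  refine ⟨by omega, isPath_deltaDel_iff.2 ⟨htail, fun i hi => ⟨?_, ?_, ?_⟩⟩⟩
  · refine ⟨i + 1, ?_⟩
    rw [← hqb, show b + 1 + i = b + (i + 1) by omega]
    exact hq.parStep_iterate (by omega)
  · rintro ⟨m, hm⟩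
    have := htail.eq_head_of_parStep_iterate hi hm hlev
    exact hmax (b + 1) (by omega) (by omega) (jb + 1) (by omega) this.symm
  · rintro (hpar | ⟨j, hj, hpj⟩)
    · exact hhead _ (by omega) hpar
    · exact hmax _ (by omega) (by omega) j hj hpj.symm

lemma exists_colonExponents_le (hp : Γ.IsPath t p) (hq : (Γ.delete {p (t - 1)}).IsPath t q)
    {d : Fin n →₀ ℕ} (hle : seqExp q t ≤ d + seqExp p t) :
    ∃ g ∈ colonExponents Γ p t, g ≤ d := by
  obtain ⟨hqΓ, hqlast⟩ := (Γ.isPath_delete_iff _ _ _).1 hq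
  have hd : ∀ i < t, (∀ j < t, p j ≠ q i) → 1 ≤ d (q i) := fun i hi =>
    one_le_of_seqExp_le_add hle hi
  by_cases hhead : ∃ i < t, Γ.par (p 0) = some (q i)
  · obtain ⟨i, hi, hu⟩ := hhead
    exact ⟨Finsupp.single (q i) 1, Or.inl (Or.inr ⟨q i, hu, rfl⟩),
      Finsupp.single_le_iff.2 (hd i hi fun j hj => hp.ne_of_par_head hu hj)⟩
  push Not at hhead
  by_cases hmeet : ∃ i < t, ∃ j < t, q i = p j
  · obtain ⟨i₀, hi₀, hmeet₀⟩ := hmeet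
    obtain ⟨b, hbmem, hmax⟩ := ((range t).filter fun i => ∃ j < t, q i = p j).exists_max_image
      id ⟨i₀, mem_filter.2 ⟨mem_range.2 hi₀, hmeet₀⟩⟩
    obtain ⟨hb, jb, hjb, hqb⟩ := mem_filter.1 hbmem
    replace hb := mem_range.1 hb
    have hbj : b ≤ jb := hp.index_le_of_eq hqΓ hb hjb hqb hhead
    have hmax' : ∀ i < t, b < i → ∀ j < t, q i ≠ p j := fun i hi hbi j hj h =>
      absurd (hmax i (mem_filter.2 ⟨mem_range.2 hi, j, hj, h⟩)) (Nat.not_le.2 hbi)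
    obtain ⟨hjt, htail⟩ :=
      isPath_deltaDel_tail hp hqΓ hhead hqlast hb hjb hbj hqb hmax'
    refine ⟨_, Or.inr (Set.mem_iUnion₂.2 ⟨jb + 1, mem_range.2 hjt, _, htail, rfl⟩),
      seqExp_le (fun _ _ => htail.inj) fun i hi => hd _ (by omega) fun j hj h => ?_⟩
    exact hmax' _ (by omega) (by omega) j hj h.symm
  · push Not at hmeet
    refine ⟨seqExp q t, Or.inl (Or.inl ⟨q, (Γ.isPath_delete_iff _ _ _).2 ⟨hqΓ, ?_⟩, rfl⟩),
      seqExp_le (fun _ _ => hqΓ.inj) fun i hi => hd i hi fun j hj h => hmeet i hi j hj h.symm⟩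
    rintro i hi (h | ⟨j, hj, h⟩)
    exacts [hhead i hi h, hmeet i hi j hj h.symm]

lemma exists_pathExponents_le_add_of_avoid (hp : Γ.IsPath t p) {j : ℕ} (hj : j < t)
    (hq : Γ.IsPath (t - j) q) (hqP : ∀ i < t - j, q i ∉ Pset Γ p t)
    (hedge : 0 < j → Γ.par (q 0) = some (p (j - 1))) :
    ∃ s ∈ (Γ.delete {p (t - 1)}).pathExponents t, s ≤ seqExp q (t - j) + seqExp p t := by
  have hmem := seqExp_add_mem_pathExponents_delete (W := {p (t - 1)}) (hp.mono hj.le) hq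
    (fun hj0 _ => hedge hj0) (fun i hi l hl h => hqP l hl (Or.inr ⟨i, by omega, h⟩))
    (fun i hi h => by have := hp.inj (by omega) (by omega) h; omega)
    (fun l hl h => hqP l hl (Or.inr ⟨t - 1, by omega, h.symm⟩))
  rw [Nat.add_sub_cancel' hj.le] at hmem
  refine ⟨_, hmem, ?_⟩
  rw [add_comm]
  gcongr
  exact seqExp_mono p hj.le

lemma exists_pathExponents_le_add (ht : 0 < t) (hp : Γ.IsPath t p)
    (hlev : Γ.level (p (t - 1)) = Γ.height) {g : Fin n →₀ ℕ} (hg : g ∈ colonExponents Γ p t) :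
    ∃ s ∈ (Γ.delete {p (t - 1)}).pathExponents t, s ≤ g + seqExp p t := by
  rcases hg with (⟨q, hq, rfl⟩ | ⟨u, hu, rfl⟩) | hg
  · obtain ⟨hqΓ, hqP⟩ := (Γ.isPath_delete_iff _ _ _).1 hq
    simpa using exists_pathExponents_le_add_of_avoid (j := 0) hp ht (by simpa using hqΓ)
      (by simpa using hqP) (by omega)
  · have hmem := seqExp_add_mem_pathExponents_delete (W := {p (t - 1)})
      (isPath_one (Γ.mem_right _ _ hu)) (hp.mono (Nat.sub_le t 1)) (fun _ _ => hu)
      (fun _ _ l hl h => hp.ne_of_par_head hu (by omega) h.symm)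
      (fun _ _ h => hp.ne_of_par_head hu (by omega) h.symm)
      (fun i hi h => by have := hp.inj (by omega) (by omega) h; omega)
    rw [Nat.add_sub_cancel' ht, seqExp, sum_range_one] at hmem
    refine ⟨_, hmem, ?_⟩
    gcongr
    exact seqExp_mono p (Nat.sub_le t 1)
  · obtain ⟨j, hj, q, hq, rfl⟩ := Set.mem_iUnion₂.1 hg
    obtain ⟨hqΓ, hqmem⟩ := isPath_deltaDel_iff.1 hq
    have hj := mem_range.1 hj
    refine exists_pathExponents_le_add_of_avoid hp hj hqΓ (fun i hi => (hqmem i hi).2.2)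
      fun hj0 => ?_
    obtain ⟨j, rfl⟩ : ∃ j', j = j' + 1 := ⟨j - 1, by omega⟩
    rw [Nat.add_sub_cancel]
    have hq₀ := hqmem 0 (by omega)
    have hpj := hp.level_add (i := j) (d := t - 1 - j) (by omega)
    rw [Nat.add_sub_cancel' (by omega), hlev] at hpj
    exact hqΓ.par_head_eq (by omega) hq₀.1
      (fun h => hq₀.2.2 (Or.inr ⟨j, by omega, h.symm⟩)) (by omega)

end ColonIdeal

theorem colon_pathIdeal_decomposition_general {n t : ℕ} (ht : 2 ≤ t) (k : Type*) [Field k]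
    (Γ : RootedTreeOn n) (p : ℕ → Fin n)
    (hp : Γ.toRootedForest.IsPath t p)
    (hlev : Γ.toRootedForest.level (p (t - 1)) = Γ.toRootedForest.height) :
    (pathIdeal k (Γ.toRootedForest.delete {p (t - 1)}) t).colon
        ((Ideal.span {∏ j ∈ Finset.range t, MvPolynomial.X (p j)} :
          Ideal (MvPolynomial (Fin n) k)) : Set (MvPolynomial (Fin n) k)) =
      pathIdeal k (Γ.toRootedForest.delete (Pset Γ p t)) t
        + Ideal.span {f | ∃ u, Γ.par (p 0) = some u ∧ f = MvPolynomial.X u}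
        + ∑ j ∈ Finset.range t, pathIdeal k (DeltaDel Γ p t j) (t - j) := by
  rw [MvPolynomial.prod_X_eq_monomial_seqExp, pathIdeal_eq_span_monomial, ← span_colonExponents]
  refine MvPolynomial.colon_span_monomial_eq ?_ ?_
  · rintro d _ ⟨q, hq, rfl⟩ hle
    exact exists_colonExponents_le hp hq hle
  · intro g hg
    exact exists_pathExponents_le_add (by omega) hp hlev hg

/-- (Lemma on the colon ideal.)  With `x_{i_t} = p (t-1)` a leaf at the
highest level `h ≥ t-1` of `Γ`, one has
`I_t(Γ∖{x_{i_t}}) : (x_{i_1}⋯x_{i_t}) = I_t(Γ∖P) + (x_{i_0}) + Σ_{j=0}^{t-1} I_{t-j}(Δ_j∖P)`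
(the summand `(x_{i_0})` being zero when `x_{i_0}` does not exist). -/
theorem colon_pathIdeal_decomposition {n t : ℕ} (ht : 2 ≤ t) (k : Type*) [Field k]
    (Γ : RootedTreeOn n) (p : ℕ → Fin n)
    (hht : t - 1 ≤ Γ.toRootedForest.height)
    (hp : Γ.toRootedForest.IsPath t p)
    (hleaf : Γ.toRootedForest.IsLeaf (p (t - 1)))
    (hlev : Γ.toRootedForest.level (p (t - 1)) = Γ.toRootedForest.height) :
    (pathIdeal k (Γ.toRootedForest.delete {p (t - 1)}) t).colon
        ((Ideal.span {∏ j ∈ Finset.range t, MvPolynomial.X (p j)} :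
          Ideal (MvPolynomial (Fin n) k)) : Set (MvPolynomial (Fin n) k)) =
      pathIdeal k (Γ.toRootedForest.delete (Pset Γ p t)) t
        + Ideal.span {f | ∃ u, Γ.par (p 0) = some u ∧ f = MvPolynomial.X u}
        + ∑ j ∈ Finset.range t, pathIdeal k (DeltaDel Γ p t j) (t - j) :=
  colon_pathIdeal_decomposition_general ht k Γ p hp hlev
end

section
/- In the setup below, assume moreover that the height of Γ satisfies h ≥ t (so that x_{i_0} exists). Then Σ_{j=0}^{t-1} l_{t-j}(Δ_j∖P) ≤ l_t(Γ_0) − 1, where Γ_0 is the induced subtree of Γ rooted at x_{i_0}. -/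
/-!
Each leaf `v` of `Δ_j ∖ P` counted on the left is a leaf of `Γ_0` counted on the right. A child
`u` of `v` in `Γ` lies in `Γ_j`; it cannot lie in `Γ_{j+1}` (then `u = x_{i_{j+1}}` and
`v = x_{i_j} ∈ P`) nor in `P` (then `v ∈ P`, or `u = x_{i_0}` has a descendant as parent), so it
would be a child of `v` in `Δ_j ∖ P`. The ancestor chain of `v` in `Δ_j ∖ P` ends at a proper
descendant of `x_{i_j}`, which is `j` steps below `x_{i_0}`, so the level of `v` in `Γ_0` exceeds
its level in `Δ_j ∖ P` by more than `j`. The forests `Δ_j` are pairwise disjoint and miss the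
leaf `x_{i_t} ∈ P`, of level `t` in `Γ_0`, which gives the extra `1`.
-/

open scoped Classical

open RootedForest

namespace RootedForest

variable {n : ℕ} {F : RootedForest n}

@[simp]
theorem iterate_parStep_none (m : ℕ) : F.parStep^[m] none = none :=
  Function.iterate_fixed rfl m

theorem iterate_parStep_succ_some (m : ℕ) (v : Fin n) :
    F.parStep^[m + 1] (some v) = F.parStep^[m] (F.par v) := rfl

theorem eq_add_of_iterate_parStep {lvl : Fin n → ℕ}
    (hlvl : ∀ v u, F.par v = some u → lvl v = lvl u + 1) {m : ℕ} {v u : Fin n}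
    (h : F.parStep^[m] (some v) = some u) : lvl v = lvl u + m := by
  induction m generalizing v with
  | zero => cases h; rfl
  | succ k ih =>
    rw [iterate_parStep_succ_some] at h
    rcases hpar : F.par v with _ | w
    · simp [hpar] at h
    · rw [hpar] at h
      rw [hlvl v w hpar, ih h]
      ring

theorem exists_iterate_parStep_eq_none (F : RootedForest n) (v : Fin n) :
    ∃ m, F.parStep^[m + 1] (some v) = none := by
  obtain ⟨lvl, hlvl⟩ := F.acyclic
  refine ⟨lvl v, Option.eq_none_iff_forall_ne_some.mpr fun u hu => ?_⟩
  have := eq_add_of_iterate_parStep hlvl hu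
  omega

theorem le_level_of_iterate_parStep {m : ℕ} {v u : Fin n}
    (h : F.parStep^[m] (some v) = some u) : m ≤ F.level v := by
  refine le_csInf (F.exists_iterate_parStep_eq_none v) fun b (hb : _ = none) => ?_
  by_contra! hbm
  rw [← Nat.sub_add_cancel hbm, Function.iterate_add_apply, hb] at h
  simp at h

theorem exists_iterate_parStep_level_eq_some (F : RootedForest n) (v : Fin n) :
    ∃ r, F.parStep^[F.level v] (some v) = some r := by
  rcases hr : F.parStep^[F.level v] (some v) with _ | r
  · obtain ⟨k, hk⟩ :=
      Nat.exists_eq_add_one_of_ne_zero fun h0 : F.level v = 0 => by simp [h0] at hr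
    exact (Nat.notMem_of_lt_sInf (by omega : k < F.level v) (by rwa [hk] at hr)).elim
  · exact ⟨r, rfl⟩

theorem mem_verts_of_iterate_parStep {m : ℕ} {v u : Fin n}
    (h : F.parStep^[m] (some v) = some u) (hv : v ∈ F.verts) : u ∈ F.verts := by
  induction m generalizing v with
  | zero => cases h; exact hv
  | succ k ih =>
    rw [iterate_parStep_succ_some] at h
    rcases hpar : F.par v with _ | w
    · simp [hpar] at h
    · rw [hpar] at h
      exact ih h (F.mem_right v w hpar)

theorem DescOrSelf.trans {x y z : Fin n} (hxy : F.DescOrSelf x y) (hyz : F.DescOrSelf y z) :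
    F.DescOrSelf x z := by
  obtain ⟨a, ha⟩ := hxy
  obtain ⟨b, hb⟩ := hyz
  exact ⟨a + b, by rw [Function.iterate_add_apply, hb, ha]⟩

theorem DescOrSelf.eq_or_descOrSelf_par {x u v : Fin n} (h : F.DescOrSelf x u)
    (hpar : F.par u = some v) : u = x ∨ F.DescOrSelf x v := by
  obtain ⟨_ | m, hm⟩ := h
  · exact .inl (Option.some_injective _ hm)
  · rw [iterate_parStep_succ_some, hpar] at hm
    exact .inr ⟨m, hm⟩

theorem not_descOrSelf_par {x v : Fin n} (hpar : F.par x = some v) : ¬ F.DescOrSelf x v := by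
  rintro ⟨m, hm⟩
  obtain ⟨lvl, hlvl⟩ := F.acyclic
  have := hlvl x v hpar
  have := eq_add_of_iterate_parStep hlvl hm
  omega

theorem delete_par_eq_some {W : Set (Fin n)} {v u : Fin n} :
    (F.delete W).par v = some u ↔ F.par v = some u ∧ v ∉ W ∧ u ∉ W := by
  by_cases hv : v ∈ F.verts \ W
  · simp only [delete, if_pos hv, Option.bind_eq_some_iff]
    constructor
    · rintro ⟨w, hw, hwu⟩
      split_ifs at hwu with hwW
      cases hwu
      exact ⟨hw, hv.2, hwW⟩
    · rintro ⟨h, -, hu⟩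
      exact ⟨u, h, if_neg hu⟩
  · simp only [delete, if_neg hv, reduceCtorEq, false_iff]
    rintro ⟨h, hvW, -⟩
    exact hv ⟨F.mem_left v u h, hvW⟩

theorem delete_verts (W : Set (Fin n)) : (F.delete W).verts = F.verts \ W := rfl

theorem IsLeaf.delete {W : Set (Fin n)} {v : Fin n} (h : F.IsLeaf v) (hv : v ∉ W) :
    (F.delete W).IsLeaf v :=
  ⟨⟨h.1, hv⟩, fun u hu => h.2 u (delete_par_eq_some.mp hu).1⟩

theorem iterate_parStep_of_delete {W : Set (Fin n)} {m : ℕ} {v u : Fin n}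
    (h : (F.delete W).parStep^[m] (some v) = some u) : F.parStep^[m] (some v) = some u := by
  induction m generalizing v with
  | zero => exact h
  | succ k ih =>
    rw [iterate_parStep_succ_some] at h ⊢
    rcases hpar : (F.delete W).par v with _ | w
    · simp [hpar] at h
    · rw [hpar] at h
      rw [(delete_par_eq_some.mp hpar).1]
      exact ih h

theorem iterate_parStep_delete_compl_descOrSelf {x v : Fin n} {m : ℕ}
    (h : F.parStep^[m] (some v) = some x) :
    (F.delete {w | F.DescOrSelf x w}ᶜ).parStep^[m] (some v) = some x := by
  induction m generalizing v with
  | zero => exact h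
  | succ k ih =>
    rw [iterate_parStep_succ_some] at h ⊢
    rcases hpar : F.par v with _ | w
    · simp [hpar] at h
    · rw [hpar] at h
      have hdel : (F.delete {w | F.DescOrSelf x w}ᶜ).par v = some w :=
        delete_par_eq_some.mpr ⟨hpar,
          not_not.mpr ⟨k + 1, by rwa [iterate_parStep_succ_some, hpar]⟩, not_not.mpr ⟨k, h⟩⟩
      rw [hdel]
      exact ih h

end RootedForest

theorem Finset.sum_ncard_add_one_le {α ι : Type*} [Finite α] {s : Finset ι} {A : ι → Set α}
    {B : Set α} {x : α} (hdisj : (s : Set ι).PairwiseDisjoint A)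
    (hsub : ∀ i ∈ s, A i ⊆ B \ {x}) (hx : x ∈ B) : ∑ i ∈ s, (A i).ncard + 1 ≤ B.ncard := by
  rw [← finsum_mem_coe_finset, ← s.finite_toSet.ncard_biUnion (fun _ _ => Set.toFinite _) hdisj,
    ← Set.ncard_sdiff_singleton_add_one hx]
  exact Nat.add_le_add_right (Set.ncard_le_ncard (Set.iUnion₂_subset hsub)) 1

section PathSetup

variable {n t : ℕ} {Γ : RootedTreeOn n} {p : ℕ → Fin n} {x0 : Fin n}

/-- The vertices `x_{i_0}, x_{i_1}, …` of the setup: `x0` followed by the path `p`. -/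
def extendPath (x0 : Fin n) (p : ℕ → Fin n) : ℕ → Fin n
  | 0 => x0
  | j + 1 => p j

theorem par_extendPath (hp : Γ.IsPath t p) (hx0 : Γ.par (p 0) = some x0) {k : ℕ} (hk : k < t) :
    Γ.par (extendPath x0 p (k + 1)) = some (extendPath x0 p k) := by
  cases k with
  | zero => exact hx0
  | succ k => exact hp.2.1 k hk

theorem iterate_parStep_extendPath (hp : Γ.IsPath t p) (hx0 : Γ.par (p 0) = some x0)
    {a d : ℕ} (h : a + d ≤ t) :
    Γ.parStep^[d] (some (extendPath x0 p (a + d))) = some (extendPath x0 p a) := by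
  induction d with
  | zero => rfl
  | succ d ih =>
    rw [← add_assoc, iterate_parStep_succ_some, par_extendPath hp hx0 (by omega)]
    exact ih (by omega)

theorem iterate_parStep_extendPath_eq_x0 (hp : Γ.IsPath t p) (hx0 : Γ.par (p 0) = some x0)
    {j : ℕ} (hj : j ≤ t) : Γ.parStep^[j] (some (extendPath x0 p j)) = some x0 := by
  simpa [extendPath] using iterate_parStep_extendPath hp hx0 (a := 0) (d := j) (by omega)

theorem mem_gammaSet_iff (hx0 : Γ.par (p 0) = some x0) {j : ℕ} {v : Fin n} :
    v ∈ GammaSet Γ p j ↔ Γ.DescOrSelf (extendPath x0 p j) v := by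
  cases j with
  | zero => simp [GammaSet, hx0, extendPath]
  | succ j => rfl

theorem gammaSet_zero_eq (hx0 : Γ.par (p 0) = some x0) :
    GammaSet Γ p 0 = {v | Γ.DescOrSelf x0 v} :=
  Set.ext fun _ => mem_gammaSet_iff hx0

theorem gammaSet_subset_gammaSet (hp : Γ.IsPath t p) (hx0 : Γ.par (p 0) = some x0)
    {j k : ℕ} (hjk : j ≤ k) (hk : k ≤ t) : GammaSet Γ p k ⊆ GammaSet Γ p j := by
  intro v hv
  rw [mem_gammaSet_iff hx0] at hv ⊢
  obtain ⟨d, rfl⟩ := Nat.exists_eq_add_of_le hjk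
  exact DescOrSelf.trans ⟨d, iterate_parStep_extendPath hp hx0 hk⟩ hv

theorem mem_pset_iff (hx0 : Γ.par (p 0) = some x0) {v : Fin n} :
    v ∈ Pset Γ p t ↔ ∃ k ≤ t, extendPath x0 p k = v := by
  simp only [Pset, Set.mem_union, Set.mem_ofPred_eq, hx0, Option.some_inj]
  constructor
  · rintro (rfl | ⟨j, hj, rfl⟩)
    · exact ⟨0, Nat.zero_le _, rfl⟩
    · exact ⟨j + 1, hj, rfl⟩
  · rintro ⟨_ | j, hj, rfl⟩
    · exact .inl rfl
    · exact .inr ⟨j, hj, rfl⟩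

theorem mem_deltaDel_verts {j : ℕ} {v : Fin n} :
    v ∈ (DeltaDel Γ p t j).verts ↔
      v ∈ Γ.verts ∧ (v ∈ GammaSet Γ p j ∧ v ∉ GammaSet Γ p (j + 1)) ∧
        v ∉ Pset Γ p t := by
  simp only [DeltaDel, delete_verts, Set.mem_sdiff, Set.mem_union, Set.mem_compl_iff, not_or,
    not_not]

theorem pairwiseDisjoint_deltaDel_verts (hp : Γ.IsPath t p) (hx0 : Γ.par (p 0) = some x0) :
    (Finset.range t : Set ℕ).PairwiseDisjoint fun j => (DeltaDel Γ p t j).verts := by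
  have key : ∀ j k, j < k → k ≤ t →
      Disjoint (DeltaDel Γ p t j).verts (DeltaDel Γ p t k).verts := fun j k hjk hk =>
    Set.disjoint_left.mpr fun v hvj hvk => (mem_deltaDel_verts.mp hvj).2.1.2 <|
      gammaSet_subset_gammaSet hp hx0 hjk hk (mem_deltaDel_verts.mp hvk).2.1.1
  intro j hj k hk hjk
  simp only [Finset.coe_range, Set.mem_Iio] at hj hk
  rcases hjk.lt_or_gt with h | h
  · exact key j k h hk.le
  · exact (key k j h hj.le).symm

theorem level_deltaDel_add_lt (hp : Γ.IsPath t p) (hx0 : Γ.par (p 0) = some x0) {j : ℕ}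
    (hj : j ≤ t) {v : Fin n} (hv : v ∈ (DeltaDel Γ p t j).verts) :
    (DeltaDel Γ p t j).level v + j < (Γ.delete (GammaSet Γ p 0)ᶜ).level v := by
  obtain ⟨r, hr⟩ := (DeltaDel Γ p t j).exists_iterate_parStep_level_eq_some v
  obtain ⟨-, ⟨hrj, -⟩, hrP⟩ := mem_deltaDel_verts.mp (mem_verts_of_iterate_parStep hr hv)
  obtain ⟨_ | m, hm⟩ := (mem_gammaSet_iff hx0).mp hrj
  · exact (hrP ((mem_pset_iff hx0).mpr ⟨j, hj, (Option.some_injective _ hm).symm⟩)).elim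
  have hchain : Γ.parStep^[j + (m + 1 + (DeltaDel Γ p t j).level v)] (some v) = some x0 := by
    rw [Function.iterate_add_apply, Function.iterate_add_apply, iterate_parStep_of_delete hr, hm]
    exact iterate_parStep_extendPath_eq_x0 hp hx0 hj
  have := le_level_of_iterate_parStep (iterate_parStep_delete_compl_descOrSelf hchain)
  rw [gammaSet_zero_eq hx0]
  omega

theorem isLeaf_of_isLeaf_deltaDel (hp : Γ.IsPath t p) (hx0 : Γ.par (p 0) = some x0) {j : ℕ}
    (hj : j < t) {v : Fin n} (hv : (DeltaDel Γ p t j).IsLeaf v) :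
    (Γ.delete (GammaSet Γ p 0)ᶜ).IsLeaf v := by
  obtain ⟨hvV, ⟨hvj, hvj1⟩, hvP⟩ := mem_deltaDel_verts.mp hv.1
  have hv0 : v ∈ GammaSet Γ p 0 := gammaSet_subset_gammaSet hp hx0 (Nat.zero_le j) hj.le hvj
  refine ⟨⟨hvV, not_not.mpr hv0⟩, fun u hu => hv.2 u ?_⟩
  have hpar : Γ.par u = some v := (delete_par_eq_some.mp hu).1
  have huj : u ∈ GammaSet Γ p j := by
    rw [mem_gammaSet_iff hx0] at hvj ⊢
    exact DescOrSelf.trans hvj ⟨1, hpar⟩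
  have huj1 : u ∉ GammaSet Γ p (j + 1) := by
    rw [mem_gammaSet_iff hx0] at hvj1 ⊢
    intro hu
    rcases hu.eq_or_descOrSelf_par hpar with rfl | hv
    · rw [par_extendPath hp hx0 hj, Option.some_inj] at hpar
      exact hvP ((mem_pset_iff hx0).mpr ⟨j, hj.le, hpar⟩)
    · exact hvj1 hv
  have huP : u ∉ Pset Γ p t := by
    rw [mem_pset_iff hx0]
    rintro ⟨_ | k, hk, rfl⟩
    · exact not_descOrSelf_par hpar ((mem_gammaSet_iff hx0).mp hv0)
    · rw [par_extendPath hp hx0 hk, Option.some_inj] at hpar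
      exact hvP ((mem_pset_iff hx0).mpr ⟨k, by omega, hpar⟩)
  exact delete_par_eq_some.mpr
    ⟨hpar, (mem_deltaDel_verts.mpr ⟨Γ.mem_left u v hpar, ⟨huj, huj1⟩, huP⟩).2, hv.1.2⟩

end PathSetup

theorem leafCount_delta_sum_le_general {n t : ℕ} (ht : 2 ≤ t)
    (Γ : RootedTreeOn n) (p : ℕ → Fin n) (x0 : Fin n)
    (hp : Γ.toRootedForest.IsPath t p)
    (hleaf : Γ.toRootedForest.IsLeaf (p (t - 1)))
    (hx0 : Γ.par (p 0) = some x0) :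
    (∑ j ∈ Finset.range t, lCount (DeltaDel Γ p t j) (t - j)) + 1 ≤
      lCount (Γ.toRootedForest.delete ((GammaSet Γ p 0)ᶜ)) t := by
  obtain ⟨s, rfl⟩ : ∃ s, t = s + 1 := ⟨t - 1, by omega⟩
  have hlast : Γ.parStep^[s + 1] (some (p s)) = some x0 :=
    iterate_parStep_extendPath_eq_x0 hp hx0 le_rfl
  refine Finset.sum_ncard_add_one_le (x := p s)
    ((pairwiseDisjoint_deltaDel_verts hp hx0).mono fun j v hv => hv.1.1) ?_ ?_
  · rintro j hj v ⟨hv, hlev⟩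
    have hjt := Finset.mem_range.mp hj
    have hlt := level_deltaDel_add_lt hp hx0 hjt.le hv.1
    refine ⟨⟨isLeaf_of_isLeaf_deltaDel hp hx0 hjt hv, by omega⟩, ?_⟩
    rintro rfl
    exact (mem_deltaDel_verts.mp hv.1).2.2 ((mem_pset_iff hx0).mpr ⟨s + 1, le_rfl, rfl⟩)
  · rw [gammaSet_zero_eq hx0]
    exact ⟨hleaf.delete (not_not.mpr ⟨s + 1, hlast⟩),
      (Nat.sub_le _ _).trans
        (le_level_of_iterate_parStep (iterate_parStep_delete_compl_descOrSelf hlast))⟩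

/-- In the standard setup, if moreover `h ≥ t` (so that the parent
`x_{i_0}` of `x_{i_1}` exists), then `Σ_{j=0}^{t-1} l_{t-j}(Δ_j∖P) ≤ l_t(Γ_0) − 1`,
where `Γ_0` is the induced subtree of `Γ` rooted at `x_{i_0}` (the inequality being
stated in the form `Σ + 1 ≤ l_t(Γ_0)`). -/
theorem leafCount_delta_sum_le {n t : ℕ} (ht : 2 ≤ t)
    (Γ : RootedTreeOn n) (p : ℕ → Fin n) (x0 : Fin n)
    (hht : t ≤ Γ.toRootedForest.height)
    (hp : Γ.toRootedForest.IsPath t p)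
    (hleaf : Γ.toRootedForest.IsLeaf (p (t - 1)))
    (hlev : Γ.toRootedForest.level (p (t - 1)) = Γ.toRootedForest.height)
    (hx0 : Γ.par (p 0) = some x0) :
    (∑ j ∈ Finset.range t, lCount (DeltaDel Γ p t j) (t - j)) + 1 ≤
      lCount (Γ.toRootedForest.delete ((GammaSet Γ p 0)ᶜ)) t :=
  leafCount_delta_sum_le_general ht Γ p x0 hp hleaf hx0
end

section
/- Let n > t. Then in S = k[x_1,…,x_n] one has the equality of ideals I_t(L_{n-1}) : (x_{n-t+1} x_{n-t+2} ⋯ x_n) = (x_{n-t}) + I_t(L_{n-(t+1)}), where I_t(L_{n-(t+1)}) = (0) if n-(t+1) < t. -/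
/-!
All ideals involved are monomial ideals, and the colon of a monomial ideal by a monomial `x^e` is
detected on exponents: `x^m` lies in it iff `m + e` dominates a generator. For the path ideal this
becomes a statement about intervals of variables. A block `[i, i + t)` with `i + t ≤ n - 1` that
fits into `supp m ∪ [n - t, n)` either avoids `n - t - 1`, hence lies below `[n - t, n)` and
already fits into `supp m`, or it contains `n - t - 1`, which `[n - t, n)` does not cover, so `x_{n-t-1}` divides
`x^m`. Conversely, `x_{n-t-1}` times `x^e` is divisible by the block starting at `n - t - 1`.
-/

/-- The path ideal `I_t(L_m)` of the path graph `L_m : x_1 → x_2 → ⋯ → x_m`, viewed inside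
`S = k[x_1,…,x_n]` (with variables indexed by `0,…,n-1`): it is generated by the monomials
`x_{i+1} x_{i+2} ⋯ x_{i+t}` for `0 ≤ i ≤ m - t`.  By convention it is `(0)` when `m < t`. -/
noncomputable def linePathIdeal (k : Type*) [Field k] (n t m : ℕ) :
    Ideal (MvPolynomial (Fin n) k) :=
  Ideal.span {f | ∃ (i : ℕ) (_ : i + t ≤ m) (h : i + t ≤ n),
    f = ∏ j : Fin t, MvPolynomial.X (⟨i + j.1, by have := j.isLt; omega⟩ : Fin n)}

open MvPolynomial

namespace MvPolynomial

variable {σ R : Type*} [CommSemiring R]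

theorem mem_span_monomial_image_colon_iff {A : Set (σ →₀ ℕ)} {e : σ →₀ ℕ}
    {p : MvPolynomial σ R} :
    p ∈ (Ideal.span ((fun s => monomial s (1 : R)) '' A)).colon
        (Ideal.span {monomial e (1 : R)} : Set (MvPolynomial σ R)) ↔
      ∀ m ∈ p.support, ∃ a ∈ A, a ≤ m + e := by
  rw [Ideal.mem_colon_span_singleton, mem_ideal_span_monomial_image]
  constructor
  · intro H m hm
    exact H (m + e) (by simpa [coeff_mul_monomial] using hm)
  · intro H m hm
    rw [mem_support_iff, coeff_mul_monomial'] at hm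
    split_ifs at hm with hle
    · obtain ⟨a, ha, hale⟩ := H (m - e) (mem_support_iff.mpr (by simpa using hm))
      exact ⟨a, ha, by rwa [tsub_add_cancel_of_le hle] at hale⟩
    · exact absurd rfl hm

theorem span_monomial_image_colon_eq {A B : Set (σ →₀ ℕ)} {e : σ →₀ ℕ}
    (h : ∀ m, (∃ a ∈ A, a ≤ m + e) ↔ ∃ b ∈ B, b ≤ m) :
    (Ideal.span ((fun s => monomial s (1 : R)) '' A)).colon
        (Ideal.span {monomial e (1 : R)} : Set (MvPolynomial σ R)) =
      Ideal.span ((fun s => monomial s (1 : R)) '' B) := by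
  ext p
  rw [mem_span_monomial_image_colon_iff, mem_ideal_span_monomial_image]
  exact forall₂_congr fun m _ => h m

end MvPolynomial

noncomputable def pathExp (n t i : ℕ) : Fin n →₀ ℕ :=
  Finsupp.equivFunOnFinite.symm fun m => if i ≤ m.1 ∧ m.1 < i + t then 1 else 0

@[simp]
lemma pathExp_apply (n t i : ℕ) (m : Fin n) :
    pathExp n t i m = if i ≤ m.1 ∧ m.1 < i + t then 1 else 0 := rfl

lemma pathExp_le_iff {n t i : ℕ} {f : Fin n →₀ ℕ} :
    pathExp n t i ≤ f ↔ ∀ j : Fin n, i ≤ j.1 → j.1 < i + t → 1 ≤ f j := by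
  refine Finsupp.le_def.trans (forall_congr' fun j => ?_)
  by_cases hj : i ≤ j.1 ∧ j.1 < i + t
  · simp [hj, Nat.one_le_iff_ne_zero]
  · simp only [pathExp_apply, if_neg hj, zero_le, true_iff]
    exact fun h1 h2 => absurd ⟨h1, h2⟩ hj

lemma prod_X_eq_monomial_pathExp {k : Type*} [CommSemiring k] {n t i : ℕ} (h : i + t ≤ n) :
    ∏ j : Fin t, X (⟨i + j.1, by have := j.isLt; omega⟩ : Fin n) =
      monomial (pathExp n t i) (1 : k) := by
  have hsum : ∑ j : Fin t, Finsupp.single (⟨i + j.1, by have := j.isLt; omega⟩ : Fin n) 1 =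
      pathExp n t i := by
    ext m
    simp only [Finsupp.finsetSum_apply, Finsupp.single_apply, Fin.ext_iff, pathExp_apply]
    split_ifs with hm
    · rw [Finset.sum_eq_single_of_mem ⟨m.1 - i, by omega⟩ (Finset.mem_univ _),
        if_pos (show i + (m.1 - i) = m.1 by omega)]
      exact fun j _ hj => if_neg fun h => hj (Fin.ext (by dsimp only; omega))
    · exact Finset.sum_eq_zero fun j _ => if_neg (by omega)
  rw [← hsum, monomial_sum_one]
  rfl

lemma linePathIdeal_eq_span_monomial (k : Type*) [Field k] (n t m : ℕ) :
    linePathIdeal k n t m =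
      Ideal.span ((fun s => monomial s (1 : k)) ''
        (pathExp n t '' {i | i + t ≤ m ∧ i + t ≤ n})) := by
  rw [linePathIdeal, Set.image_image]
  congr 1
  ext f
  simp only [Set.mem_ofPred_eq, Set.mem_image, exists_prop, and_assoc]
  refine exists_congr fun i => and_congr_right fun _ =>
    ⟨fun ⟨hn, hf⟩ => ⟨hn, by rw [hf, prod_X_eq_monomial_pathExp hn]⟩,
      fun ⟨hn, hf⟩ => ⟨hn, by rw [← hf, prod_X_eq_monomial_pathExp hn]⟩⟩

lemma exists_pathExp_le_add_pathExp_iff {n t : ℕ} (hn : t < n) (f : Fin n →₀ ℕ) :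
    (∃ a ∈ pathExp n t '' {i | i + t ≤ n - 1 ∧ i + t ≤ n},
        a ≤ f + pathExp n t (n - t)) ↔
      ∃ b ∈ {Finsupp.single (⟨n - t - 1, by omega⟩ : Fin n) 1} ∪
          pathExp n t '' {i | i + t ≤ n - (t + 1) ∧ i + t ≤ n}, b ≤ f := by
  simp only [Set.mem_union, Set.mem_singleton_iff, Set.mem_image, Set.mem_ofPred_eq,
    exists_exists_and_eq_and, exists_eq_or_imp, Finsupp.single_le_iff]
  constructor
  · rintro ⟨i, ⟨hi, -⟩, hle⟩
    rw [pathExp_le_iff] at hle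
    by_cases hfar : i + t ≤ n - (t + 1)
    · refine Or.inr ⟨i, ⟨hfar, by omega⟩, pathExp_le_iff.mpr fun j hj₁ hj₂ => ?_⟩
      have := hle j hj₁ hj₂
      rwa [Finsupp.add_apply, pathExp_apply, if_neg (by omega), add_zero] at this
    · left
      have := hle ⟨n - t - 1, by omega⟩ (show i ≤ n - t - 1 by omega)
        (show n - t - 1 < i + t by omega)
      rwa [Finsupp.add_apply, pathExp_apply, if_neg (by simp; omega), add_zero] at this
  · rintro (hv | ⟨i, ⟨hi, hin⟩, hle⟩)
    · refine ⟨n - t - 1, ⟨by omega, by omega⟩, pathExp_le_iff.mpr fun j hj₁ hj₂ => ?_⟩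
      by_cases hj : j.1 = n - t - 1
      · rw [show j = ⟨n - t - 1, by omega⟩ from Fin.ext hj]
        exact hv.trans le_self_add
      · rw [Finsupp.add_apply, pathExp_apply, if_pos (by omega)]
        exact le_add_self
    · exact ⟨i, ⟨by omega, hin⟩, hle.trans le_self_add⟩

/-- For `n > t`, in `S = k[x_1,…,x_n]` one has
`I_t(L_{n-1}) : (x_{n-t+1} x_{n-t+2} ⋯ x_n) = (x_{n-t}) + I_t(L_{n-(t+1)})`
(with `I_t(L_{n-(t+1)}) = (0)` if `n - (t+1) < t`). -/
theorem linePathIdeal_colon {n t : ℕ} (ht : 2 ≤ t) (k : Type*) [Field k]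
    (hn : t < n) :
    (linePathIdeal k n t (n - 1)).colon
        ((Ideal.span {∏ j : Fin t,
          MvPolynomial.X (⟨(n - t) + j.1, by have := j.isLt; omega⟩ : Fin n)} :
            Ideal (MvPolynomial (Fin n) k)) : Set (MvPolynomial (Fin n) k)) =
      Ideal.span {(MvPolynomial.X (⟨n - t - 1, by omega⟩ : Fin n) : MvPolynomial (Fin n) k)} +
        linePathIdeal k n t (n - (t + 1)) := by
  rw [prod_X_eq_monomial_pathExp (by omega), linePathIdeal_eq_span_monomial,
    linePathIdeal_eq_span_monomial, X,
    ← Set.image_singleton (f := fun s => monomial s (1 : k)) (a := Finsupp.single _ 1),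
    Submodule.add_eq_sup, ← Ideal.span_union, ← Set.image_union]
  exact span_monomial_image_colon_eq (exists_pathExp_le_add_pathExp_iff hn)
end
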